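/- Let α ∈ (0,1) and β ∈ ℝ. For ν > 0 and t > 0 define θ(t;ν) = arg( D(t;ν) + i·sin((1−α)π/2) ), where D(t;ν) = (t² − (β/ν)²)/(1 + (β/ν)²)·t^{1−α} + cos((1−α)π/2), and define θ₀(u) = arctan( sin((1−α)π/2) / (u^{3−α} + cos((1−α)π/2)) ). Then there exist ν₀ > 0 and a continuous function g : (0,∞) → (0,∞), independent of ν, with g(u) = O(u^{1−α}) as u → 0 and g(u) = O(u^{α−3}) as u → ∞, such that for all ν ≥ ν₀ and all u > 0: |θ(u;ν) − θ₀(u)| ≤ g(u)·(β/ν)². -/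

import Mathlib

/-! With `s = sin ((1 - α) π / 2)`, `c = cos ((1 - α) π / 2)`, `p = u ^ (1 - α)` and
`e = (β / ν) ^ 2`, the real part `D = (u ^ 2 - e) / (1 + e) * p + c` in `thetaNu` is positive, so
`θ(u;ν) = arctan (s / D)`, while `θ₀(u) = arctan (s / D₀)` with `D₀ = u ^ 2 * p + c`.
The gap `D₀ - D = e (1 + u ^ 2) p / (1 + e)` is `O(e)`, and `D ≥ D₀ / 2` once
`e ≤ min (1/4) (c/2)`. As `arctan` is 1-Lipschitz,
`|θ - θ₀| ≤ s |D₀ - D| / (D D₀) ≤ 2 s p (1 + u ^ 2) / D₀ ^ 2 * e`,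
and this `g(u)` is `O(u ^ (1 - α))` at `0` and `O(u ^ (α - 3))` at `∞`. -/

open Real Complex Set Filter

/-- `θ(t;ν) = arg( D(t;ν) + i·sin((1−α)π/2) )` with
`D(t;ν) = (t² − (β/ν)²)/(1 + (β/ν)²)·t^{1−α} + cos((1−α)π/2)`. -/
noncomputable def thetaNu (α β : ℝ) (ν : ℝ) (t : ℝ) : ℝ :=
  Complex.arg ((((t ^ 2 - (β / ν) ^ 2) / (1 + (β / ν) ^ 2) * t ^ (1 - α)
      + Real.cos ((1 - α) * π / 2) : ℝ) : ℂ)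
    + (Real.sin ((1 - α) * π / 2) : ℝ) * Complex.I)

/-- `θ₀(u) = arctan( sin((1−α)π/2)/(u^{3−α} + cos((1−α)π/2)) )`. -/
noncomputable def theta0 (α : ℝ) (u : ℝ) : ℝ :=
  Real.arctan (Real.sin ((1 - α) * π / 2) / (u ^ (3 - α) + Real.cos ((1 - α) * π / 2)))

theorem Real.lipschitzWith_arctan : LipschitzWith 1 arctan := by
  refine lipschitzWith_of_nnnorm_deriv_le differentiable_arctan fun x => ?_
  rw [← NNReal.coe_le_coe, coe_nnnorm, NNReal.coe_one, deriv_arctan, Real.norm_eq_abs,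
    abs_of_pos (by positivity), div_le_one (by positivity)]
  nlinarith [sq_nonneg x]

theorem Real.abs_arctan_sub_arctan_le (a b : ℝ) : |arctan a - arctan b| ≤ |a - b| := by
  simpa [Real.dist_eq] using lipschitzWith_arctan.dist_le_mul a b

theorem Complex.arg_ofReal_add_ofReal_mul_I {x : ℝ} (hx : 0 < x) (y : ℝ) :
    arg (x + y * I) = Real.arctan (y / x) := by
  have hre : 0 < (x + y * I : ℂ).re := by simpa using hx
  obtain ⟨hlo, hhi⟩ := abs_lt.mp (abs_arg_lt_pi_div_two_iff.mpr (Or.inl hre))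
  refine (Real.arctan_eq_of_tan_eq ?_ ⟨hlo, hhi⟩).symm
  simp [tan_arg]

theorem abs_div_sub_div_le_of_half_le {s D D₀ : ℝ} (hs : 0 ≤ s) (hD₀ : 0 < D₀)
    (hD : D₀ / 2 ≤ D) : |s / D - s / D₀| ≤ 2 * s * |D₀ - D| / D₀ ^ 2 := by
  have hDpos : 0 < D := by linarith
  rw [div_sub_div _ _ hDpos.ne' hD₀.ne', show s * D₀ - D * s = s * (D₀ - D) by ring,
    abs_div, abs_mul, abs_of_nonneg hs, abs_of_pos (mul_pos hDpos hD₀),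
    div_le_div_iff₀ (mul_pos hDpos hD₀) (by positivity)]
  have := mul_nonneg hs (abs_nonneg (D₀ - D))
  nlinarith [mul_le_mul_of_nonneg_left hD (mul_nonneg this hD₀.le)]

theorem div_sq_le_of_le_div_sqrt {β e ν : ℝ} (he : 0 < e) (hν : (|β| + 1) / √e ≤ ν) :
    (β / ν) ^ 2 ≤ e := by
  have hνpos : 0 < ν := lt_of_lt_of_le (by positivity) hν
  have habs : |β / ν| ≤ √e := by
    rw [abs_div, abs_of_pos hνpos, div_le_iff₀ hνpos]
    rw [div_le_iff₀ (sqrt_pos.mpr he)] at hν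
    nlinarith [sqrt_pos.mpr he, abs_nonneg β]
  calc (β / ν) ^ 2 = |β / ν| ^ 2 := (sq_abs _).symm
    _ ≤ √e ^ 2 := by gcongr
    _ = e := sq_sqrt he.le

theorem add_div_two_le_sub_div_one_add_mul_add {x p c e : ℝ} (hx : 0 ≤ x) (hp : 0 ≤ p)
    (hpx : p ≤ 1 + x * p) (he : 0 ≤ e) (he₁ : e ≤ 1 / 4) (hec : e ≤ c / 2) :
    (x * p + c) / 2 ≤ (x - e) / (1 + e) * p + c := by
  rw [div_mul_eq_mul_div, ← sub_le_iff_le_add, le_div_iff₀ (by positivity)]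
  nlinarith [mul_le_mul_of_nonneg_left hpx he, mul_nonneg (sub_nonneg.2 he₁) (mul_nonneg hx hp),
    mul_nonneg (he.trans hec) he]

theorem Real.rpow_three_sub {u : ℝ} (hu : 0 < u) (α : ℝ) :
    u ^ (3 - α) = u ^ 2 * u ^ (1 - α) := by
  rw [show 3 - α = (1 - α) + (2 : ℕ) by push_cast; ring, rpow_add_natCast hu.ne', mul_comm]

theorem Real.rpow_le_one_add_sq_mul_rpow {u a : ℝ} (hu : 0 ≤ u) (ha : 0 ≤ a) :
    u ^ a ≤ 1 + u ^ 2 * u ^ a := by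
  rcases le_total u 1 with h | h
  · nlinarith [rpow_le_one hu h ha, rpow_nonneg hu a, sq_nonneg u]
  · nlinarith [one_le_rpow h ha, one_le_pow₀ (n := 2) h]

theorem sin_one_sub_mul_pi_div_two_pos {α : ℝ} (h₀ : -1 < α) (h₁ : α < 1) :
    0 < Real.sin ((1 - α) * π / 2) :=
  sin_pos_of_pos_of_lt_pi (by nlinarith [pi_pos]) (by nlinarith [pi_pos])

theorem cos_one_sub_mul_pi_div_two_pos {α : ℝ} (h₀ : 0 < α) (h₁ : α < 2) :
    0 < Real.cos ((1 - α) * π / 2) :=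
  cos_pos_of_mem_Ioo ⟨by nlinarith [pi_pos], by nlinarith [pi_pos]⟩

noncomputable def thetaBound (α u : ℝ) : ℝ :=
  2 * Real.sin ((1 - α) * π / 2) * u ^ (1 - α) * (1 + u ^ 2)
    / (u ^ (3 - α) + Real.cos ((1 - α) * π / 2)) ^ 2

theorem continuousOn_thetaBound {α : ℝ} (hα : α ∈ Ioo 0 1) :
    ContinuousOn (thetaBound α) (Ioi 0) := by
  have hc := cos_one_sub_mul_pi_div_two_pos hα.1 (by linarith [hα.2])
  have h₁ := continuous_rpow_const (show 0 ≤ 1 - α by linarith [hα.2])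
  have h₃ := continuous_rpow_const (show 0 ≤ 3 - α by linarith [hα.2])
  refine ContinuousOn.div (by fun_prop) (by fun_prop) fun u (hu : 0 < u) => ?_
  have := rpow_pos_of_pos hu (3 - α)
  positivity

theorem thetaBound_pos {α : ℝ} (hα : α ∈ Ioo 0 1) {u : ℝ} (hu : 0 < u) :
    0 < thetaBound α u := by
  have hs := sin_one_sub_mul_pi_div_two_pos (by linarith [hα.1]) hα.2
  have hc := cos_one_sub_mul_pi_div_two_pos hα.1 (by linarith [hα.2])
  have := rpow_pos_of_pos hu (1 - α)
  have := rpow_pos_of_pos hu (3 - α)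
  unfold thetaBound
  positivity

theorem thetaBound_le_of_lt_one {α : ℝ} (hα : α ∈ Ioo 0 1) {u : ℝ} (hu₀ : 0 < u)
    (hu₁ : u < 1) :
    thetaBound α u ≤ 4 * Real.sin ((1 - α) * π / 2) / Real.cos ((1 - α) * π / 2) ^ 2
      * u ^ (1 - α) := by
  have hs := sin_one_sub_mul_pi_div_two_pos (by linarith [hα.1]) hα.2
  have hc := cos_one_sub_mul_pi_div_two_pos hα.1 (by linarith [hα.2])
  have hp := rpow_pos_of_pos hu₀ (1 - α)
  have hq := rpow_pos_of_pos hu₀ (3 - α)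
  calc thetaBound α u
      ≤ 2 * Real.sin ((1 - α) * π / 2) * u ^ (1 - α) * 2
          / Real.cos ((1 - α) * π / 2) ^ 2 := by
        unfold thetaBound
        gcongr
        · nlinarith
        · linarith
    _ = _ := by ring

theorem thetaBound_le_of_one_le {α : ℝ} (hα : α ∈ Ioo 0 1) {u : ℝ} (hu : 1 ≤ u) :
    thetaBound α u ≤ 4 * Real.sin ((1 - α) * π / 2) * u ^ (α - 3) := by
  have hu₀ : 0 < u := one_pos.trans_le hu
  have hs := sin_one_sub_mul_pi_div_two_pos (by linarith [hα.1]) hα.2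
  have hc := cos_one_sub_mul_pi_div_two_pos hα.1 (by linarith [hα.2])
  have hq := rpow_pos_of_pos hu₀ (3 - α)
  have hpq : u ^ (1 - α) ≤ u ^ (3 - α) := rpow_le_rpow_of_exponent_le hu (by linarith)
  calc thetaBound α u
      = 2 * Real.sin ((1 - α) * π / 2) * (u ^ (1 - α) + u ^ (3 - α))
          / (u ^ (3 - α) + Real.cos ((1 - α) * π / 2)) ^ 2 := by
        rw [thetaBound, rpow_three_sub hu₀]; ring
    _ ≤ 2 * Real.sin ((1 - α) * π / 2) * (u ^ (3 - α) + u ^ (3 - α))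
          / (u ^ (3 - α)) ^ 2 := by
        gcongr; linarith
    _ = 4 * Real.sin ((1 - α) * π / 2) * (u ^ (3 - α))⁻¹ := by field_simp; ring
    _ = _ := by rw [← rpow_neg hu₀.le, neg_sub]

theorem abs_thetaNu_sub_theta0_le {α : ℝ} (hα : α ∈ Ioo 0 1) {β ν u : ℝ} (hu : 0 < u)
    (hε₁ : (β / ν) ^ 2 ≤ 1 / 4) (hεc : (β / ν) ^ 2 ≤ Real.cos ((1 - α) * π / 2) / 2) :
    |thetaNu α β ν u - theta0 α u| ≤ thetaBound α u * (β / ν) ^ 2 := by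
  set s := Real.sin ((1 - α) * π / 2)
  set c := Real.cos ((1 - α) * π / 2)
  set e := (β / ν) ^ 2
  set p := u ^ (1 - α)
  have hs : 0 < s := sin_one_sub_mul_pi_div_two_pos (by linarith [hα.1]) hα.2
  have hc : 0 < c := cos_one_sub_mul_pi_div_two_pos hα.1 (by linarith [hα.2])
  have he : 0 ≤ e := sq_nonneg _
  have hp : 0 < p := rpow_pos_of_pos hu _
  have hD₀ : 0 < u ^ 2 * p + c := by positivity
  have hD : (u ^ 2 * p + c) / 2 ≤ (u ^ 2 - e) / (1 + e) * p + c :=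
    add_div_two_le_sub_div_one_add_mul_add (sq_nonneg u) hp.le
      (rpow_le_one_add_sq_mul_rpow hu.le (by linarith [hα.2])) he hε₁ hεc
  have hgap : u ^ 2 * p + c - ((u ^ 2 - e) / (1 + e) * p + c)
      = e * (1 + u ^ 2) * p / (1 + e) := by
    field_simp
    ring
  rw [thetaNu, arg_ofReal_add_ofReal_mul_I (by linarith), theta0, thetaBound,
    rpow_three_sub hu]
  calc |Real.arctan (s / ((u ^ 2 - e) / (1 + e) * p + c))
        - Real.arctan (s / (u ^ 2 * p + c))|
      ≤ |s / ((u ^ 2 - e) / (1 + e) * p + c) - s / (u ^ 2 * p + c)| :=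
        abs_arctan_sub_arctan_le _ _
    _ ≤ 2 * s * |u ^ 2 * p + c - ((u ^ 2 - e) / (1 + e) * p + c)| / (u ^ 2 * p + c) ^ 2 :=
        abs_div_sub_div_le_of_half_le hs.le hD₀ hD
    _ = 2 * s * (e * (1 + u ^ 2) * p / (1 + e)) / (u ^ 2 * p + c) ^ 2 := by
        rw [hgap, abs_of_nonneg (by positivity)]
    _ ≤ 2 * s * (e * (1 + u ^ 2) * p) / (u ^ 2 * p + c) ^ 2 := by
        gcongr
        exact div_le_self (by positivity) (by linarith)
    _ = 2 * s * p * (1 + u ^ 2) / (u ^ 2 * p + c) ^ 2 * e := by ring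

/-- Uniform bound `|θ(u;ν) − θ₀(u)| ≤ g(u)·(β/ν)²` for large `ν`, with `g` continuous,
positive, `O(u^{1−α})` at `0` and `O(u^{α−3})` at `∞`. -/
theorem thetaNu_approx_theta0
    (α β : ℝ) (hα : α ∈ Set.Ioo (0:ℝ) 1) :
    ∃ ν₀ : ℝ, 0 < ν₀ ∧
    ∃ g : ℝ → ℝ,
      ContinuousOn g (Ioi 0) ∧
      (∀ u : ℝ, 0 < u → 0 < g u) ∧
      (∃ c : ℝ, 0 < c ∧ ∃ δ : ℝ, 0 < δ ∧ ∀ u ∈ Ioo (0:ℝ) δ, g u ≤ c * u ^ (1 - α)) ∧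
      (∃ c : ℝ, 0 < c ∧ ∃ R : ℝ, 0 < R ∧ ∀ u : ℝ, R ≤ u → g u ≤ c * u ^ (α - 3)) ∧
      (∀ ν : ℝ, ν₀ ≤ ν → ∀ u : ℝ, 0 < u →
        |thetaNu α β ν u - theta0 α u| ≤ g u * (β / ν) ^ 2) := by
  have hs := sin_one_sub_mul_pi_div_two_pos (by linarith [hα.1]) hα.2
  have hc := cos_one_sub_mul_pi_div_two_pos hα.1 (by linarith [hα.2])
  have he₀ : 0 < min (1 / 4) (Real.cos ((1 - α) * π / 2) / 2) := by positivity
  refine ⟨(|β| + 1) / √(min (1 / 4) (Real.cos ((1 - α) * π / 2) / 2)), by positivity,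
    thetaBound α, continuousOn_thetaBound hα, fun u hu => thetaBound_pos hα hu,
    ⟨_, by positivity, 1, one_pos, fun u hu => thetaBound_le_of_lt_one hα hu.1 hu.2⟩,
    ⟨_, by positivity, 1, one_pos, fun u hu => thetaBound_le_of_one_le hα hu⟩,
    fun ν hν u hu => ?_⟩
  have hε := div_sq_le_of_le_div_sqrt he₀ hν
  exact abs_thetaNu_sub_theta0_le hα hu (hε.trans (min_le_left _ _))
    (hε.trans (min_le_right _ _))
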